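/- arXiv:2509.19293 — 7 statements merged into one kernel-verified Lean document; each statement's English description precedes it below -/
import Mathlib

section
/- Let V be a finite-dimensional real inner product space, Ω ⊆ V a nonempty proper open convex cone, and H ⊆ V a linear subspace such that H^⊥ ∩ Ω* ≠ ∅ (where H^⊥ is the orthogonal complement of H and Ω* the open dual cone). Then for every compact subset K ⊆ Ω, the set (K + H) ∩ closure(Ω) = {k + h : k ∈ K, h ∈ H} ∩ closure(Ω) is compact. -/
open Set Filter
open scoped Pointwise RealInnerProductSpace

/-- A subset `C` of a real vector space is a cone if `t • x ∈ C` for all `x ∈ C`, `t > 0`. -/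
def IsCone {V : Type*} [AddCommGroup V] [Module ℝ V] (C : Set V) : Prop :=
  ∀ x ∈ C, ∀ t : ℝ, 0 < t → t • x ∈ C

/-- The open dual cone of an open cone `Ω` with respect to the inner product. -/
def openDualCone {V : Type*} [NormedAddCommGroup V] [InnerProductSpace ℝ V] (Ω : Set V) :
    Set V :=
  {v | ∀ ω ∈ closure Ω, ω ≠ 0 → 0 < ⟪v, ω⟫}

theorem stmt_0 {V : Type*} [NormedAddCommGroup V] [InnerProductSpace ℝ V]
    [FiniteDimensional ℝ V]
    (Ω : Set V) (hne : Ω.Nonempty) (hopen : IsOpen Ω) (hconv : Convex ℝ Ω)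
    (hcone : IsCone Ω) (hproper : closure Ω ∩ -closure Ω = {0})
    (H : Submodule ℝ V) (hH : ((Hᗮ : Set V) ∩ openDualCone Ω).Nonempty)
    (K : Set V) (hKc : IsCompact K) (hKΩ : K ⊆ Ω) :
    IsCompact ((K + (H : Set V)) ∩ closure Ω) := by
  obtain ⟨e, heH, heD⟩ := hH
  -- closure Ω is a cone
  have hclcone : ∀ x ∈ closure Ω, ∀ t : ℝ, 0 < t → t • x ∈ closure Ω := by
    intro x hx t ht
    have h1 : t • x ∈ t • closure Ω := smul_mem_smul_set hx
    have h2 : t • closure Ω = closure (t • Ω) := (closure_smul₀' (ne_of_gt ht) Ω).symm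
    rw [h2] at h1
    exact closure_mono (fun y hy => by
      obtain ⟨z, hz, rfl⟩ := hy
      exact hcone z hz t ht) h1
  -- the sphere part of closure Ω is compact
  set S : Set V := {ω ∈ closure Ω | ‖ω‖ = 1} with hS
  have hScomp : IsCompact S := by
    have : IsClosed S := isClosed_closure.inter (isClosed_eq continuous_norm continuous_const)
    exact Metric.isCompact_of_isClosed_isBounded this (Metric.isBounded_closedBall (x := (0:V)) (r := 1)
      |>.subset (fun x hx => by
        simp only [Metric.mem_closedBall, dist_zero_right]
        exact le_of_eq hx.2))
  -- positive lower bound c for ⟪e, ω⟫ on S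
  have key : ∃ c : ℝ, 0 < c ∧ ∀ x ∈ closure Ω, c * ‖x‖ ≤ ⟪e, x⟫ := by
    rcases S.eq_empty_or_nonempty with hSe | hSne
    · refine ⟨1, one_pos, fun x hx => ?_⟩
      rcases eq_or_ne x 0 with rfl | hx0
      · simp
      · exfalso
        have : (‖x‖⁻¹ : ℝ) • x ∈ S := by
          refine ⟨hclcone x hx _ (inv_pos.mpr (norm_pos_iff.mpr hx0)), ?_⟩
          simp [norm_smul, abs_of_pos, inv_mul_cancel₀ (norm_ne_zero_iff.mpr hx0)]
        rw [hSe] at this; exact this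
    · obtain ⟨m, hmS, hmin⟩ := hScomp.exists_isMinOn hSne
        (Continuous.continuousOn (Continuous.inner continuous_const continuous_id : Continuous fun ω => ⟪e, ω⟫))
      have hm0 : m ≠ 0 := by
        intro h; rw [h] at hmS; simpa using hmS.2
      refine ⟨⟪e, m⟫, heD m hmS.1 hm0, fun x hx => ?_⟩
      rcases eq_or_ne x 0 with rfl | hx0
      · simp
      · have hxS : (‖x‖⁻¹ : ℝ) • x ∈ S := by
          refine ⟨hclcone x hx _ (inv_pos.mpr (norm_pos_iff.mpr hx0)), ?_⟩
          simp [norm_smul, abs_of_pos, inv_mul_cancel₀ (norm_ne_zero_iff.mpr hx0)]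
        have := hmin hxS
        simp only [Set.mem_setOf_eq, real_inner_smul_right] at this
        have hnx : (0:ℝ) < ‖x‖ := norm_pos_iff.mpr hx0
        calc ⟪e, m⟫ * ‖x‖ ≤ (‖x‖⁻¹ * ⟪e, x⟫) * ‖x‖ := by nlinarith
          _ = ⟪e, x⟫ := by field_simp
  obtain ⟨c, hc, hcb⟩ := key
  -- bound ⟪e, ·⟫ on K
  obtain ⟨M, hM⟩ := (hKc.image (Continuous.inner continuous_const continuous_id : Continuous fun k => ⟪e, k⟫)).isBounded.subset_closedBall 0
  -- closedness
  have hclosed : IsClosed ((K + (H : Set V)) ∩ closure Ω) :=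
    (IsClosed.add_left_of_isCompact (H.closed_of_finiteDimensional) hKc).inter isClosed_closure
  -- boundedness
  refine Metric.isCompact_of_isClosed_isBounded hclosed ((Metric.isBounded_closedBall (x := (0:V))
    (r := M / c)).subset fun x ⟨hxKH, hxΩ⟩ => ?_)
  obtain ⟨k, hk, h, hh, rfl⟩ := hxKH
  have hker : ⟪e, h⟫ = 0 := (Submodule.mem_orthogonal' H e).mp heH h hh
  have h1 : c * ‖k + h‖ ≤ ⟪e, k + h⟫ := hcb _ hxΩ
  have h2 : ⟪e, k + h⟫ = ⟪e, k⟫ := by rw [inner_add_right, hker, add_zero]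
  have h3 : ⟪e, k⟫ ≤ M := by
    have := hM ⟨k, hk, rfl⟩
    simp only [Metric.mem_closedBall, dist_zero_right, Real.norm_eq_abs] at this
    exact (abs_le.mp this).2
  simp only [Metric.mem_closedBall, dist_zero_right]
  rw [le_div_iff₀ hc]
  nlinarith
end

section
/- Let V be a finite-dimensional real inner product space, Ω ⊆ V a nonempty proper open convex cone, and U ⊆ Ω* a compact subset of the open dual cone. Then there exists a constant p > 0 such that for all ω ∈ closure(Ω) and all y ∈ U one has p·‖ω‖ ≤ ⟪ω, y⟫, where ‖ω‖ = √⟪ω, ω⟫ is the induced norm. -/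
open Set Filter
open scoped Pointwise RealInnerProductSpace

theorem stmt_1 {V : Type*} [NormedAddCommGroup V] [InnerProductSpace ℝ V]
    [FiniteDimensional ℝ V]
    (Ω : Set V) (hne : Ω.Nonempty) (hopen : IsOpen Ω) (hconv : Convex ℝ Ω)
    (hcone : IsCone Ω) (hproper : closure Ω ∩ -closure Ω = {0})
    (U : Set V) (hU : U ⊆ openDualCone Ω) (hUc : IsCompact U) :
    ∃ p : ℝ, 0 < p ∧ ∀ ω ∈ closure Ω, ∀ y ∈ U, p * ‖ω‖ ≤ ⟪ω, y⟫ := by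
  -- closure Ω is a cone
  have hclcone : ∀ x ∈ closure Ω, ∀ t : ℝ, 0 < t → t • x ∈ closure Ω := by
    intro x hx t ht
    have h1 : t • x ∈ (fun y : V => t • y) '' closure Ω := ⟨x, hx, rfl⟩
    have h2 : (fun y : V => t • y) '' closure Ω ⊆ closure ((fun y : V => t • y) '' Ω) :=
      image_closure_subset_closure_image (continuous_const_smul t)
    refine closure_mono ?_ (h2 h1)
    rintro z ⟨w, hw, rfl⟩
    exact hcone w hw t ht
  set K : Set (V × V) := (closure Ω ∩ Metric.sphere (0 : V) 1) ×ˢ U with hK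
  have hKc : IsCompact K :=
    ((isCompact_sphere (0:V) 1).inter_left isClosed_closure).prod hUc
  have hfc : Continuous fun q : V × V => ⟪q.1, q.2⟫ := continuous_inner
  rcases K.eq_empty_or_nonempty with hKe | hKne
  · refine ⟨1, one_pos, fun ω hω y hy => ?_⟩
    have hω0 : ω = 0 := by
      by_contra h
      have hn : ‖ω‖ ≠ 0 := norm_ne_zero_iff.mpr h
      have : (‖ω‖⁻¹ • ω, y) ∈ K := by
        refine ⟨⟨hclcone ω hω _ (by positivity), ?_⟩, hy⟩
        simp [norm_smul, abs_of_pos, inv_mul_cancel₀ hn]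
      rw [hKe] at this; exact this
    simp [hω0]
  · obtain ⟨⟨ω₀, y₀⟩, hq0, hmin⟩ := hKc.exists_isMinOn hKne (hfc.continuousOn)
    have hω₀cl : ω₀ ∈ closure Ω := hq0.1.1
    have hω₀n : ω₀ ≠ 0 := by
      intro h
      have := hq0.1.2
      simp [h] at this
    have hp : 0 < ⟪ω₀, y₀⟫ := by
      have := hU hq0.2 ω₀ hω₀cl hω₀n
      rwa [real_inner_comm] at this
    refine ⟨⟪ω₀, y₀⟫, hp, fun ω hω y hy => ?_⟩
    rcases eq_or_ne ω 0 with rfl | hne'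
    · simp
    · have hn : (0:ℝ) < ‖ω‖ := norm_pos_iff.mpr hne'
      have hmem : (‖ω‖⁻¹ • ω, y) ∈ K := by
        refine ⟨⟨hclcone ω hω _ (by positivity), ?_⟩, hy⟩
        simp [norm_smul, abs_of_pos, inv_mul_cancel₀ hn.ne']
      have := hmin hmem
      simp only [Set.mem_setOf_eq, real_inner_smul_left] at this
      calc ⟪ω₀, y₀⟫ * ‖ω‖ ≤ (‖ω‖⁻¹ * ⟪ω, y⟫) * ‖ω‖ := by
            exact mul_le_mul_of_nonneg_right this hn.le
        _ = ⟪ω, y⟫ := by field_simp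
end

section
/- Let V be a finite-dimensional real inner product space, Ω ⊆ V a nonempty proper open convex cone, and H ⊆ V a linear subspace with orthogonal complement H^⊥. Then H^⊥ ∩ Ω* ≠ ∅ if and only if H ∩ closure(Ω) = {0}. -/
/-!
If `v ∈ Hᗮ` is positive on `closure Ω \ {0}`, no nonzero vector of `H` can lie in `closure Ω`.
Conversely, `C = closure Ω` is a closed pointed convex cone, so the convex hull of its unit
section `C ∩ sphere 0 1` is a convex set avoiding `0` (pointedness), and it is compact by
Carathéodory's theorem. It is therefore disjoint from `H` and strictly separated from it by
Hahn–Banach; the separating functional vanishes on the subspace `H`, is positive on the unit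
section and hence on `C \ {0}`, and its Riesz representative lies in `Hᗮ ∩ Ω*`.
-/

open Set Filter
open scoped Pointwise RealInnerProductSpace

open Topology

section ConvexHull

variable {E : Type*} [AddCommGroup E] [Module ℝ E] [FiniteDimensional ℝ E]

theorem convexHull_eq_biUnion_image_stdSimplex (s : Set E) :
    convexHull ℝ s = ⋃ k ≤ Module.finrank ℝ E + 1,
      (fun p : (Fin k → ℝ) × (Fin k → E) ↦ ∑ i, p.1 i • p.2 i) ''
        (stdSimplex ℝ (Fin k) ×ˢ univ.pi fun _ ↦ s) := by
  refine Subset.antisymm (fun x hx ↦ ?_) (iUnion₂_subset fun k _ ↦ ?_)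
  · obtain ⟨ι, _, z, w, hzs, hz, hw0, hw1, rfl⟩ := eq_pos_convex_span_of_mem_convexHull hx
    have hcard : Fintype.card ι ≤ Module.finrank ℝ E + 1 :=
      hz.card_le_finrank_succ.trans (Nat.succ_le_succ (Submodule.finrank_le _))
    let e := Fintype.equivFin ι
    refine mem_biUnion hcard ⟨(w ∘ e.symm, z ∘ e.symm), ⟨⟨fun i ↦ (hw0 _).le, ?_⟩,
      fun i _ ↦ hzs (mem_range_self _)⟩, ?_⟩
    · simpa [Function.comp_def] using (e.symm.sum_comp w).trans hw1
    · exact e.symm.sum_comp fun i ↦ w i • z i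
  · rintro _ ⟨⟨w, z⟩, ⟨hw, hz⟩, rfl⟩
    exact mem_convexHull_of_exists_fintype w z hw.1 hw.2 (fun i ↦ hz i (mem_univ i)) rfl

theorem IsCompact.convexHull [TopologicalSpace E] [ContinuousAdd E] [ContinuousSMul ℝ E]
    {s : Set E} (hs : IsCompact s) : IsCompact (convexHull ℝ s) := by
  rw [convexHull_eq_biUnion_image_stdSimplex]
  refine (finite_Iic _).isCompact_biUnion fun k _ ↦ ?_
  refine ((isCompact_stdSimplex ℝ (Fin k)).prod (isCompact_univ_pi fun _ ↦ hs)).image ?_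
  fun_prop

end ConvexHull

namespace IsCone

variable {E : Type*} [AddCommGroup E] [Module ℝ E] {C : Set E}

theorem closure [TopologicalSpace E] [ContinuousConstSMul ℝ E] (hC : IsCone C) :
    IsCone (_root_.closure C) := fun _ hx t ht ↦
  map_mem_closure (continuous_const_smul t) hx fun y hy ↦ hC y hy t ht

theorem zero_mem_closure [TopologicalSpace E] [ContinuousSMul ℝ E] (hC : IsCone C)
    (hne : C.Nonempty) : (0 : E) ∈ _root_.closure C := by
  obtain ⟨x, hx⟩ := hne
  have hlim : Tendsto (fun t : ℝ ↦ t • x) (𝓝[>] 0) (𝓝 0) :=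
    tendsto_nhdsWithin_of_tendsto_nhds
      ((continuous_id.smul continuous_const).tendsto' 0 0 (zero_smul ℝ x))
  exact mem_closure_of_tendsto hlim (eventually_nhdsWithin_of_forall fun t ht ↦ hC x hx t ht)

theorem convex_diff_zero (hC : IsCone C) (hconv : Convex ℝ C) (hpointed : C ∩ -C ⊆ {0}) :
    Convex ℝ (C \ {0}) := by
  rintro x ⟨hxC, hx0⟩ y ⟨hyC, hy0⟩ a b ha hb hab
  refine ⟨hconv hxC hyC ha hb hab, fun hzero ↦ ?_⟩
  rw [mem_singleton_iff] at hx0 hy0 hzero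
  rcases ha.eq_or_lt with rfl | ha
  · simp_all
  rcases hb.eq_or_lt with rfl | hb
  · simp_all
  have hax : a • x ∈ C ∩ -C :=
    ⟨hC x hxC a ha, by rw [Set.mem_neg, neg_eq_of_add_eq_zero_right hzero]; exact hC y hyC b hb⟩
  exact hx0 ((smul_eq_zero.mp (hpointed hax)).resolve_left ha.ne')

end IsCone

theorem Submodule.apply_eq_zero_of_forall_lt {E : Type*} [AddCommGroup E] [Module ℝ E]
    (p : Submodule ℝ E) (f : E →ₗ[ℝ] ℝ) {u : ℝ} (hf : ∀ x ∈ p, f x < u) (x : E) (hx : x ∈ p) :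
    f x = 0 := by
  by_contra hfx
  have := hf (((u + 1) / f x) • x) (p.smul_mem _ hx)
  rw [map_smul, smul_eq_mul, div_mul_cancel₀ _ hfx] at this
  linarith

theorem IsCone.exists_strongDual_eq_zero_on_and_pos {E : Type*} [NormedAddCommGroup E]
    [NormedSpace ℝ E] [FiniteDimensional ℝ E] {C : Set E} (hC : IsCone C) (hclosed : IsClosed C)
    (hconv : Convex ℝ C) (hpointed : C ∩ -C ⊆ {0}) (H : Submodule ℝ E)
    (hH : (H : Set E) ∩ C ⊆ {0}) :
    ∃ f : StrongDual ℝ E, (∀ x ∈ H, f x = 0) ∧ ∀ x ∈ C, x ≠ 0 → 0 < f x := by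
  set K := C ∩ Metric.sphere 0 1
  have hKcompact : IsCompact (convexHull ℝ K) :=
    ((isCompact_sphere 0 1).inter_left hclosed).convexHull
  have hKC : convexHull ℝ K ⊆ C \ {0} :=
    convexHull_min (fun x hx ↦ ⟨hx.1, by rintro rfl; simp [K] at hx⟩)
      (hC.convex_diff_zero hconv hpointed)
  have hdisj : Disjoint (H : Set E) (convexHull ℝ K) :=
    disjoint_left.2 fun x hxH hxK ↦ (hKC hxK).2 (hH ⟨hxH, (hKC hxK).1⟩)
  obtain ⟨f, u, w, hfu, huw, hfw⟩ := geometric_hahn_banach_closed_compact H.convex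
    H.closed_of_finiteDimensional (convex_convexHull ℝ K) hKcompact hdisj
  have hfH := H.apply_eq_zero_of_forall_lt (f : E →ₗ[ℝ] ℝ) hfu
  refine ⟨f, hfH, fun x hx hx0 ↦ ?_⟩
  have hnorm : 0 < ‖x‖ := norm_pos_iff.2 hx0
  have hxK : ‖x‖⁻¹ • x ∈ K :=
    ⟨hC x hx _ (inv_pos.2 hnorm), by simp [norm_smul, hnorm.ne']⟩
  have hpos : 0 < f (‖x‖⁻¹ • x) := calc
    0 = f 0 := f.map_zero.symm
    _ < u := hfu 0 H.zero_mem
    _ < w := huw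
    _ < f (‖x‖⁻¹ • x) := hfw _ (subset_convexHull ℝ K hxK)
  rw [map_smul, smul_eq_mul] at hpos
  exact pos_of_mul_pos_right hpos (inv_nonneg.2 hnorm.le)

theorem stmt_2_general {V : Type*} [NormedAddCommGroup V] [InnerProductSpace ℝ V]
    [FiniteDimensional ℝ V]
    (Ω : Set V) (hne : Ω.Nonempty) (hconv : Convex ℝ Ω)
    (hcone : IsCone Ω) (hproper : closure Ω ∩ -closure Ω = {0})
    (H : Submodule ℝ V) :
    ((Hᗮ : Set V) ∩ openDualCone Ω).Nonempty ↔ (H : Set V) ∩ closure Ω = {0} := by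
  constructor
  · rintro ⟨v, hvH, hvΩ⟩
    refine Subset.antisymm (fun x ⟨hxH, hxΩ⟩ ↦ ?_)
      (singleton_subset_iff.2 ⟨H.zero_mem, hcone.zero_mem_closure hne⟩)
    by_contra hx0
    have hpos := hvΩ x hxΩ hx0
    rw [(Submodule.mem_orthogonal' H v).1 hvH x hxH] at hpos
    exact lt_irrefl 0 hpos
  · intro hH
    obtain ⟨f, hfH, hfΩ⟩ := hcone.closure.exists_strongDual_eq_zero_on_and_pos isClosed_closure
      hconv.closure hproper.subset H hH.subset
    refine ⟨(InnerProductSpace.toDual ℝ V).symm f, ?_, fun ω hω hω0 ↦ ?_⟩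
    · exact (Submodule.mem_orthogonal' H _).2 fun x hx ↦ by
        rw [InnerProductSpace.toDual_symm_apply, hfH x hx]
    · rw [InnerProductSpace.toDual_symm_apply]
      exact hfΩ ω hω hω0

theorem stmt_2 {V : Type*} [NormedAddCommGroup V] [InnerProductSpace ℝ V]
    [FiniteDimensional ℝ V]
    (Ω : Set V) (hne : Ω.Nonempty) (hopen : IsOpen Ω) (hconv : Convex ℝ Ω)
    (hcone : IsCone Ω) (hproper : closure Ω ∩ -closure Ω = {0})
    (H : Submodule ℝ V) :
    ((Hᗮ : Set V) ∩ openDualCone Ω).Nonempty ↔ (H : Set V) ∩ closure Ω = {0} :=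
  stmt_2_general Ω hne hconv hcone hproper H
end

section
/- Let V = EuclideanSpace ℝ (Fin n), Ω ⊆ V a nonempty proper open convex cone, and φ the characteristic function of Ω. Then for every linear automorphism g ∈ GL(V) with g·Ω = Ω and every ω ∈ Ω, one has φ(g·ω) = |det g|⁻¹ · φ(ω). -/
open Set Filter
open scoped Pointwise RealInnerProductSpace

open MeasureTheory

/-- The characteristic function of a proper open convex cone `Ω ⊆ EuclideanSpace ℝ (Fin n)`:
`φ(ω) = ∫_{Ω*} exp (−⟪ω, y⟫) dy`, the integral over the open dual cone with respect to
Lebesgue measure. -/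
noncomputable def charFun {n : ℕ} (Ω : Set (EuclideanSpace ℝ (Fin n)))
    (ω : EuclideanSpace ℝ (Fin n)) : ℝ :=
  ∫ y in openDualCone Ω, Real.exp (-⟪ω, y⟫)

/-! The adjoint `g*` of a linear automorphism `g` of `Ω` preserves the dual cone `Ω*`, and
`⟪g ω, y⟫ = ⟪ω, g* y⟫`; so the substitution `y ↦ g* y` in the integral defining `φ (g ω)` gives
`φ ω` up to the Jacobian `|det g*| = |det g|`. -/

theorem openDualCone_preimage_adjoint {V : Type*} [NormedAddCommGroup V]
    [InnerProductSpace ℝ V] [FiniteDimensional ℝ V] {Ω : Set V} (g : V ≃ₗ[ℝ] V) (hg : g '' Ω = Ω) :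
    LinearMap.adjoint (g : V →ₗ[ℝ] V) ⁻¹' openDualCone Ω = openDualCone Ω := by
  have hclosure : g '' closure Ω = closure Ω :=
    (g.toContinuousLinearEquiv.image_closure Ω).trans (congrArg closure hg)
  ext y
  conv_rhs => rw [openDualCone, mem_ofPred_eq, ← hclosure, forall_mem_image]
  simp only [mem_preimage, openDualCone, mem_ofPred_eq, LinearMap.adjoint_inner_left,
    LinearEquiv.coe_coe, ne_eq, LinearEquiv.map_eq_zero_iff]

theorem LinearMap.det_adjoint {𝕜 E : Type*} [RCLike 𝕜] [NormedAddCommGroup E]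
    [InnerProductSpace 𝕜 E] [FiniteDimensional 𝕜 E] (f : E →ₗ[𝕜] E) :
    LinearMap.det (LinearMap.adjoint f) = starRingEnd 𝕜 (LinearMap.det f) := by
  let b := stdOrthonormalBasis 𝕜 E
  rw [← LinearMap.det_toMatrix b.toBasis, LinearMap.toMatrix_adjoint, Matrix.det_conjTranspose,
    LinearMap.det_toMatrix]
  rfl

theorem MeasureTheory.Measure.setIntegral_preimage_comp_linearMap {E F : Type*}
    [NormedAddCommGroup E] [NormedSpace ℝ E] [MeasurableSpace E] [BorelSpace E]
    [FiniteDimensional ℝ E] [NormedAddCommGroup F] [NormedSpace ℝ F]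
    (μ : Measure E) [μ.IsAddHaarMeasure] {f : E →ₗ[ℝ] E} (hf : LinearMap.det f ≠ 0)
    (h : E → F) (s : Set E) :
    ∫ y in f ⁻¹' s, h (f y) ∂μ = |LinearMap.det f|⁻¹ • ∫ y in s, h y ∂μ := by
  let e := (f.equivOfDetNeZero hf).toContinuousLinearEquiv.toHomeomorph.toMeasurableEquiv
  rw [← abs_inv, ← ENNReal.toReal_ofReal (abs_nonneg _), ← integral_smul_measure,
    ← Measure.restrict_smul, ← map_linearMap_addHaar_eq_smul_addHaar μ hf]
  exact (setIntegral_map_equiv e h s).symm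

theorem stmt_4_general {n : ℕ} (Ω : Set (EuclideanSpace ℝ (Fin n)))
    (g : EuclideanSpace ℝ (Fin n) ≃ₗ[ℝ] EuclideanSpace ℝ (Fin n))
    (hg : ⇑g '' Ω = Ω) (ω : EuclideanSpace ℝ (Fin n)) :
    charFun Ω (g ω) = |LinearMap.det (g : EuclideanSpace ℝ (Fin n) →ₗ[ℝ]
      EuclideanSpace ℝ (Fin n))|⁻¹ * charFun Ω ω := by
  set A := LinearMap.adjoint (g : EuclideanSpace ℝ (Fin n) →ₗ[ℝ] EuclideanSpace ℝ (Fin n))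
  have hdet : LinearMap.det A = LinearMap.det (g : EuclideanSpace ℝ (Fin n) →ₗ[ℝ] _) := by
    rw [LinearMap.det_adjoint, conj_trivial]
  have hdet_ne : LinearMap.det A ≠ 0 := by
    rw [hdet]; exact (LinearEquiv.isUnit_det' g).ne_zero
  calc _root_.charFun Ω (g ω)
      = ∫ y in A ⁻¹' openDualCone Ω, Real.exp (-⟪ω, A y⟫) := by
        rw [openDualCone_preimage_adjoint g hg]
        simp only [_root_.charFun, A, LinearMap.adjoint_inner_right, LinearEquiv.coe_coe]
    _ = |LinearMap.det A|⁻¹ * _root_.charFun Ω ω :=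
        Measure.setIntegral_preimage_comp_linearMap volume hdet_ne (fun y ↦ Real.exp (-⟪ω, y⟫)) _
    _ = _ := by rw [hdet]

theorem stmt_4 {n : ℕ} (Ω : Set (EuclideanSpace ℝ (Fin n)))
    (hne : Ω.Nonempty) (hopen : IsOpen Ω) (hconv : Convex ℝ Ω)
    (hcone : IsCone Ω) (hproper : closure Ω ∩ -closure Ω = {0})
    (g : EuclideanSpace ℝ (Fin n) ≃ₗ[ℝ] EuclideanSpace ℝ (Fin n))
    (hg : ⇑g '' Ω = Ω) (ω : EuclideanSpace ℝ (Fin n)) (hω : ω ∈ Ω) :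
    charFun Ω (g ω) = |LinearMap.det (g : EuclideanSpace ℝ (Fin n) →ₗ[ℝ]
      EuclideanSpace ℝ (Fin n))|⁻¹ * charFun Ω ω :=
  stmt_4_general Ω g hg ω
end

section
/- Let V = EuclideanSpace ℝ (Fin n), Ω ⊆ V a nonempty proper open convex cone, φ the characteristic function of Ω, and ψ(ω) = ω* := −∇(log φ)(ω) the dual map. Then for all ω ∈ Ω one has ⟪ω, ω*⟫ = n = dim_ℝ V. -/
open Set Filter
open scoped Pointwise RealInnerProductSpace

open MeasureTheory

/-- The dual map `ψ(ω) = ω* := −∇(log φ)(ω)` of a cone `Ω`, where `φ` is its characteristic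
function and the gradient is taken with respect to the inner product. -/
noncomputable def dualMap {n : ℕ} (Ω : Set (EuclideanSpace ℝ (Fin n)))
    (ω : EuclideanSpace ℝ (Fin n)) : EuclideanSpace ℝ (Fin n) :=
  -gradient (fun x => Real.log (charFun Ω x)) ω

/-! The open dual cone `Ω*` is invariant under positive dilations, so the substitution
`y ↦ t • y` gives `φ (t • ω) = t⁻ⁿ φ ω`. Hence `log φ (t • ω) = log φ ω - n log t`, and
differentiating at `t = 1` (Euler's identity for homogeneous functions) gives
`⟪∇ log φ ω, ω⟫ = -n`.

Two facts make this legitimate. For `x` near `ω` one has `⟪y, x⟫ ≥ r ‖y‖` on `Ω*`, which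
dominates the integrand and its derivative, so `φ` is differentiable at `ω`. And `φ ω > 0`
because `Ω*` has nonempty interior: otherwise the closed dual cone of `closure Ω` would lie in a
hyperplane `u⊥`, and by the bipolar theorem both `u` and `-u` would lie in `closure Ω`,
contradicting properness. -/

open Metric Topology

section DualCone

variable {V : Type*} [NormedAddCommGroup V] [InnerProductSpace ℝ V] {Ω : Set V}

theorem smul_openDualCone {t : ℝ} (ht : 0 < t) : t • openDualCone Ω = openDualCone Ω := by
  have hsmul : ∀ {s : ℝ}, 0 < s → ∀ y ∈ openDualCone Ω, s • y ∈ openDualCone Ω :=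
    fun hs y hy x hx hx0 => by
      rw [real_inner_smul_left]
      exact mul_pos hs (hy x hx hx0)
  ext y
  refine ⟨?_, fun hy => ?_⟩
  · rintro ⟨z, hz, rfl⟩
    exact hsmul ht z hz
  · rw [mem_smul_set_iff_inv_smul_mem₀ ht.ne']
    exact hsmul (inv_pos.2 ht) y hy

theorem convex_openDualCone : Convex ℝ (openDualCone Ω) := by
  intro y hy z hz a b ha hb hab x hx hx0
  rw [inner_add_left, real_inner_smul_left, real_inner_smul_left]
  rcases ha.eq_or_lt with rfl | ha
  · rw [zero_add] at hab
    simpa [hab] using hz x hx hx0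
  · exact add_pos_of_pos_of_nonneg (mul_pos ha (hy x hx hx0)) (mul_nonneg hb (hz x hx hx0).le)

theorem mul_norm_le_inner_of_ball_subset {x y : V} {ε : ℝ} (hε : 0 < ε) (hΩ : ball x ε ⊆ Ω)
    (hy : y ∈ openDualCone Ω) : ε * ‖y‖ ≤ ⟪y, x⟫ := by
  rcases eq_or_ne y 0 with rfl | hy0
  · simp
  set z := x - (ε * ‖y‖⁻¹) • y
  have hz : z ∈ closure Ω := by
    refine closure_mono hΩ ?_
    rw [closure_ball x hε.ne', mem_closedBall, dist_eq_norm, sub_sub_cancel_left, norm_neg,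
      norm_smul, Real.norm_of_nonneg (by positivity),
      inv_mul_cancel_right₀ (norm_ne_zero_iff.2 hy0)]
  have hyz : 0 ≤ ⟪y, z⟫ := by
    rcases eq_or_ne z 0 with h | h
    · rw [h, inner_zero_right]
    · exact (hy z hz h).le
  have : ⟪y, z⟫ = ⟪y, x⟫ - ε * ‖y‖ := by
    rw [inner_sub_right, real_inner_smul_right, real_inner_self_eq_norm_mul_norm]
    field_simp
  linarith

theorem exists_pos_forall_mul_norm_le_inner {ω : V} (hω : Ω ∈ 𝓝 ω) :
    ∃ r > 0, ∀ x ∈ ball ω r, ∀ y ∈ openDualCone Ω, r * ‖y‖ ≤ ⟪y, x⟫ := by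
  obtain ⟨ε, hε, hball⟩ := Metric.mem_nhds_iff.1 hω
  refine ⟨ε / 2, half_pos hε, fun x hx y hy => mul_norm_le_inner_of_ball_subset (half_pos hε)
    ((ball_subset_ball' ?_).trans hball) hy⟩
  rw [mem_ball] at hx
  linarith

theorem exists_properCone_coe_eq_closure (hconv : Convex ℝ Ω) (hcone : IsCone Ω)
    (h0 : (0 : V) ∈ closure Ω) : ∃ C : ProperCone ℝ V, (C : Set V) = closure Ω := by
  let K : ConvexCone ℝ V :=
    { carrier := Ω
      smul_mem' := fun c hc x hx => hcone x hx c hc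
      add_mem' := fun x hx y hy => by
        have := hcone _ (hconv hx hy (by norm_num : (0 : ℝ) ≤ 1 / 2)
          (by norm_num : (0 : ℝ) ≤ 1 / 2) (by norm_num)) 2 two_pos
        rwa [smul_add, smul_smul, smul_smul, show (2 : ℝ) * (1 / 2) = 1 by norm_num, one_smul,
          one_smul] at this }
  have hK : (K.closure : Set V).Nonempty ∧ IsClosed (K.closure : Set V) :=
    ⟨⟨0, h0⟩, isClosed_closure⟩
  lift K.closure to ProperCone ℝ V using hK with C hC
  exact ⟨C, congrArg ((↑) : ConvexCone ℝ V → Set V) hC⟩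

variable [CompleteSpace V]

theorem interior_innerDual_closure_subset_openDualCone :
    interior (ProperCone.innerDual (closure Ω) : Set V) ⊆ openDualCone Ω := by
  intro v hv x hx hx0
  obtain ⟨r, hr, hball⟩ := Metric.isOpen_iff.1 isOpen_interior v hv
  have hmem : v - (r / 2 * ‖x‖⁻¹) • x ∈ ProperCone.innerDual (closure Ω) := by
    refine interior_subset (hball ?_)
    rw [mem_ball, dist_eq_norm, sub_sub_cancel_left, norm_neg, norm_smul,
      Real.norm_of_nonneg (by positivity), inv_mul_cancel_right₀ (norm_ne_zero_iff.2 hx0)]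
    exact half_lt_self hr
  have := ProperCone.mem_innerDual.1 hmem hx
  rw [inner_sub_right, real_inner_smul_right, real_inner_self_eq_norm_mul_norm, real_inner_comm,
    ← mul_assoc, inv_mul_cancel_right₀ (norm_ne_zero_iff.2 hx0)] at this
  have : 0 < r / 2 * ‖x‖ := by positivity
  linarith

theorem ProperCone.interior_innerDual_nonempty [FiniteDimensional ℝ V] (C : ProperCone ℝ V)
    (hC : (C : Set V) ∩ -C = {0}) : (interior (↑(innerDual (C : Set V)) : Set V)).Nonempty := by
  set D : Set V := SetLike.coe (innerDual (C : Set V))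
  have hD0 : (0 : V) ∈ D := zero_mem (innerDual (C : Set V))
  by_contra hint
  have hspan : Submodule.span ℝ D ≠ ⊤ := by
    intro htop
    apply hint
    rw [(ProperCone.convex _).interior_nonempty_iff_affineSpan_eq_top,
      AffineSubspace.affineSpan_eq_top_iff_vectorSpan_eq_top_of_nonempty ℝ V V ⟨0, hD0⟩,
      vectorSpan_eq_span_vsub_set_right ℝ hD0]
    simpa using htop
  obtain ⟨u, hu, hu0⟩ := (Submodule.span ℝ D)ᗮ.exists_mem_ne_zero_of_ne_bot
    (by rwa [Ne, Submodule.orthogonal_eq_bot_iff])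
  have huD : ∀ y ∈ D, ⟪y, u⟫ = 0 := fun y hy =>
    (Submodule.mem_orthogonal _ u).1 hu y (Submodule.subset_span hy)
  have hmem : u ∈ (C : Set V) ∩ -C := by
    rw [← innerDual_innerDual C]
    refine ⟨mem_innerDual.2 fun y hy => (huD y hy).ge, mem_innerDual.2 fun y hy => ?_⟩
    rw [inner_neg_right, huD y hy, neg_zero]
  exact hu0 (by simpa [hC] using hmem)

theorem interior_openDualCone_nonempty [FiniteDimensional ℝ V] (hconv : Convex ℝ Ω)
    (hcone : IsCone Ω) (hproper : closure Ω ∩ -closure Ω = {0}) :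
    (interior (openDualCone Ω)).Nonempty := by
  obtain ⟨C, hC⟩ :=
    exists_properCone_coe_eq_closure hconv hcone (hproper.superset (mem_singleton 0)).1
  have hsub := interior_innerDual_closure_subset_openDualCone (Ω := Ω)
  rw [← hC] at hproper hsub
  exact (C.interior_innerDual_nonempty hproper).mono (interior_maximal hsub isOpen_interior)

end DualCone

theorem integrable_pow_norm_mul_exp_neg_mul_norm {E : Type*} [NormedAddCommGroup E]
    [NormedSpace ℝ E] [FiniteDimensional ℝ E] [MeasurableSpace E] [BorelSpace E]
    (μ : Measure E) [μ.IsAddHaarMeasure] (k : ℕ) {c : ℝ} (hc : 0 < c) :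
    Integrable (fun y : E => ‖y‖ ^ k * Real.exp (-(c * ‖y‖))) μ := by
  rcases subsingleton_or_nontrivial E with hE | hE
  · exact .of_finite
  refine (integrable_fun_norm_addHaar μ (f := fun t => t ^ k * Real.exp (-(c * t)))).2 ?_
  refine (integrableOn_rpow_mul_exp_neg_mul_rpow (s := (Module.finrank ℝ E - 1 + k : ℕ))
    (neg_one_lt_zero.trans_le (Nat.cast_nonneg _)) one_pos hc).congr_fun (fun t _ => ?_)
    measurableSet_Ioi
  simp only [smul_eq_mul, Real.rpow_natCast, Real.rpow_one, pow_add, neg_mul, mul_assoc]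

section CharFun

variable {n : ℕ} {Ω : Set (EuclideanSpace ℝ (Fin n))}

theorem charFun_smul (x : EuclideanSpace ℝ (Fin n)) {t : ℝ} (ht : 0 < t) :
    charFun Ω (t • x) = (t ^ n)⁻¹ * charFun Ω x := by
  have := Measure.setIntegral_comp_smul_of_pos volume (fun y => Real.exp (-⟪x, y⟫))
    (openDualCone Ω) ht
  simp only [real_inner_smul_right, smul_openDualCone ht, finrank_euclideanSpace_fin,
    smul_eq_mul, ← real_inner_smul_left] at this
  rwa [_root_.charFun, _root_.charFun]

theorem integrableOn_exp_neg_inner_openDualCone {ω : EuclideanSpace ℝ (Fin n)} (hω : Ω ∈ 𝓝 ω) :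
    IntegrableOn (fun y => Real.exp (-⟪ω, y⟫)) (openDualCone Ω) := by
  obtain ⟨r, hr, hbound⟩ := exists_pos_forall_mul_norm_le_inner hω
  refine ((integrable_pow_norm_mul_exp_neg_mul_norm volume 0 hr).integrableOn).mono'
    (by fun_prop) ?_
  filter_upwards [ae_restrict_mem₀ (convex_openDualCone.nullMeasurableSet volume)] with y hy
  rw [Real.norm_of_nonneg (Real.exp_pos _).le, pow_zero, one_mul, Real.exp_le_exp, neg_le_neg_iff,
    real_inner_comm]
  exact hbound ω (mem_ball_self hr) y hy

theorem charFun_pos (hconv : Convex ℝ Ω) (hcone : IsCone Ω)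
    (hproper : closure Ω ∩ -closure Ω = {0}) {ω : EuclideanSpace ℝ (Fin n)} (hω : Ω ∈ 𝓝 ω) :
    0 < charFun Ω ω := by
  obtain ⟨v, hv⟩ := interior_openDualCone_nonempty hconv hcone hproper
  have : NeZero (volume.restrict (openDualCone Ω)) := ⟨by
    rw [Ne, Measure.restrict_eq_zero]
    exact (isOpen_interior.measure_pos volume ⟨v, hv⟩).ne' ∘ measure_mono_null interior_subset⟩
  exact integral_exp_pos (integrableOn_exp_neg_inner_openDualCone hω)

theorem hasFDerivAt_charFun {ω : EuclideanSpace ℝ (Fin n)} (hω : Ω ∈ 𝓝 ω) :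
    HasFDerivAt (charFun Ω)
      (∫ y in openDualCone Ω, Real.exp (-⟪ω, y⟫) • -innerSL ℝ y) ω := by
  obtain ⟨r, hr, hbound⟩ := exists_pos_forall_mul_norm_le_inner hω
  have hderiv : ∀ x y : EuclideanSpace ℝ (Fin n),
      HasFDerivAt (fun x => Real.exp (-⟪x, y⟫)) (Real.exp (-⟪x, y⟫) • -innerSL ℝ y) x := by
    intro x y
    have : HasFDerivAt (fun x => -⟪x, y⟫) (-innerSL ℝ y) x := by
      refine (innerSL ℝ y).hasFDerivAt.neg.congr_of_eventuallyEq (.of_forall fun x => ?_)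
      simp [real_inner_comm]
    exact this.exp
  refine hasFDerivAt_integral_of_dominated_of_fderiv_le (F := fun x y => Real.exp (-⟪x, y⟫))
    (bound := fun y => ‖y‖ ^ 1 * Real.exp (-(r * ‖y‖)))
    (ball_mem_nhds ω hr) (.of_forall fun x => by fun_prop)
    (integrableOn_exp_neg_inner_openDualCone hω) (by fun_prop) ?_
    (integrable_pow_norm_mul_exp_neg_mul_norm volume 1 hr).integrableOn
    (.of_forall fun y x _ => hderiv x y)
  filter_upwards [ae_restrict_mem₀ (convex_openDualCone.nullMeasurableSet volume)] with y hy x hx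
  rw [norm_smul, norm_neg, innerSL_apply_norm, Real.norm_of_nonneg (Real.exp_pos _).le, pow_one,
    mul_comm]
  gcongr
  rw [real_inner_comm]
  exact hbound x hx y hy

end CharFun

theorem HasFDerivAt.apply_self_eq_of_map_smul {E : Type*} [NormedAddCommGroup E]
    [NormedSpace ℝ E] {g : E → ℝ} {g' : E →L[ℝ] ℝ} {x : E} {c : ℝ} (hg : HasFDerivAt g g' x)
    (hhom : ∀ t > 0, g (t • x) = g x + c * Real.log t) : g' x = c := by
  have hcurve : HasDerivAt (fun t : ℝ => g (t • x)) (g' x) 1 := by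
    have hline : HasDerivAt (fun t : ℝ => t • x) x 1 := by
      simpa using (hasDerivAt_id (1 : ℝ)).smul_const x
    exact (one_smul ℝ x ▸ hg).comp_hasDerivAt 1 hline
  have hlog : HasDerivAt (fun t : ℝ => g x + c * Real.log t) c 1 := by
    simpa using ((Real.hasDerivAt_log one_ne_zero).const_mul c).const_add (g x)
  refine hcurve.unique (hlog.congr_of_eventuallyEq ?_)
  filter_upwards [Ioi_mem_nhds one_pos] with t ht using hhom t ht

theorem stmt_6_general {n : ℕ} (Ω : Set (EuclideanSpace ℝ (Fin n)))
    (hopen : IsOpen Ω) (hconv : Convex ℝ Ω)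
    (hcone : IsCone Ω) (hproper : closure Ω ∩ -closure Ω = {0})
    (ω : EuclideanSpace ℝ (Fin n)) (hω : ω ∈ Ω) :
    ⟪ω, dualMap Ω ω⟫ = (n : ℝ) := by
  have hω' : Ω ∈ 𝓝 ω := hopen.mem_nhds hω
  have hpos : 0 < charFun Ω ω := charFun_pos hconv hcone hproper hω'
  have hlog := (hasFDerivAt_charFun hω').log hpos.ne'
  have heuler := hlog.apply_self_eq_of_map_smul (c := -n) fun t ht => by
    rw [charFun_smul ω ht, Real.log_mul (by positivity) hpos.ne', Real.log_inv, Real.log_pow]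
    ring
  rw [dualMap, inner_neg_right, real_inner_comm, gradient, InnerProductSpace.toDual_symm_apply,
    hlog.fderiv, heuler, neg_neg]

theorem stmt_6 {n : ℕ} (Ω : Set (EuclideanSpace ℝ (Fin n)))
    (hne : Ω.Nonempty) (hopen : IsOpen Ω) (hconv : Convex ℝ Ω)
    (hcone : IsCone Ω) (hproper : closure Ω ∩ -closure Ω = {0})
    (ω : EuclideanSpace ℝ (Fin n)) (hω : ω ∈ Ω) :
    ⟪ω, dualMap Ω ω⟫ = (n : ℝ) :=
  stmt_6_general Ω hopen hconv hcone hproper ω hω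
end

section
/- Let V be a finite-dimensional real inner product space, Ω ⊆ V a nonempty proper open convex cone, and H ⊆ V a linear subspace with H ∩ closure(Ω) = {0}. Then closure(Ω + H) = closure(Ω) + H. -/
open Set Filter
open scoped Pointwise RealInnerProductSpace

theorem stmt_13 {V : Type*} [NormedAddCommGroup V] [InnerProductSpace ℝ V]
    [FiniteDimensional ℝ V]
    (Ω : Set V) (hne : Ω.Nonempty) (hopen : IsOpen Ω) (hconv : Convex ℝ Ω)
    (hcone : IsCone Ω) (hproper : closure Ω ∩ -closure Ω = {0})
    (H : Submodule ℝ V) (hH : (H : Set V) ∩ closure Ω = {0}) :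
    closure (Ω + (H : Set V)) = closure Ω + (H : Set V) := by
  set K := closure Ω with hK
  have hKclosed : IsClosed K := isClosed_closure
  have hKcone : ∀ x ∈ K, ∀ t : ℝ, 0 < t → t • x ∈ K := by
    intro x hx t ht
    exact map_mem_closure (continuous_const_smul t) hx fun y hy => hcone y hy t ht
  have hHclosed : IsClosed (H : Set V) := H.closed_of_finiteDimensional
  -- the key positive-distance bound
  obtain ⟨δ, hδpos, hδ⟩ : ∃ δ > (0:ℝ), ∀ x ∈ K, ∀ h ∈ (H : Set V), δ * ‖x‖ ≤ ‖x + h‖ := by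
    by_cases hS : (K ∩ Metric.sphere (0:V) 1).Nonempty
    · have hScomp : IsCompact (K ∩ Metric.sphere (0:V) 1) :=
        (isCompact_sphere 0 1).inter_left hKclosed
      obtain ⟨x₀, hx₀, hmin⟩ := hScomp.exists_isMinOn hS
        (Metric.continuous_infDist_pt (H : Set V)).continuousOn
      set δ := Metric.infDist x₀ (H : Set V) with hδdef
      have hδpos : 0 < δ := by
        rcases lt_or_eq_of_le (Metric.infDist_nonneg (x := x₀) (s := (H : Set V))) with h | h
        · exact h
        · exfalso
          have : x₀ ∈ closure (H : Set V) :=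
            (Metric.mem_closure_iff_infDist_zero ⟨0, H.zero_mem⟩).2 h.symm
          rw [hHclosed.closure_eq] at this
          have : x₀ ∈ (H : Set V) ∩ K := ⟨this, hx₀.1⟩
          rw [hH] at this
          rw [Set.mem_singleton_iff] at this
          have hx1 : ‖x₀‖ = 1 := by simpa using hx₀.2
          rw [this] at hx1
          simp at hx1
      refine ⟨δ, hδpos, ?_⟩
      intro x hx h hh
      rcases eq_or_ne x 0 with rfl | hx0
      · simp
      · have hn : (0:ℝ) < ‖x‖ := norm_pos_iff.2 hx0
        have hmem : ‖x‖⁻¹ • x ∈ K ∩ Metric.sphere (0:V) 1 := by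
          refine ⟨hKcone x hx _ (inv_pos.2 hn), ?_⟩
          simp [norm_smul, abs_of_pos (inv_pos.2 hn), inv_mul_cancel₀ hn.ne']
        have h1 : δ ≤ Metric.infDist (‖x‖⁻¹ • x) (H : Set V) := hmin hmem
        have h2 : Metric.infDist (‖x‖⁻¹ • x) (H : Set V) ≤ dist (‖x‖⁻¹ • x) (-(‖x‖⁻¹ • h)) :=
          Metric.infDist_le_dist_of_mem (neg_mem (H.smul_mem _ hh))
        have h3 : dist (‖x‖⁻¹ • x) (-(‖x‖⁻¹ • h)) = ‖x‖⁻¹ * ‖x + h‖ := by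
          rw [dist_eq_norm, sub_neg_eq_add, ← smul_add, norm_smul]
          simp [abs_of_pos (inv_pos.2 hn)]
        have := (h1.trans h2).trans_eq h3
        rw [mul_comm δ ‖x‖]
        calc ‖x‖ * δ ≤ ‖x‖ * (‖x‖⁻¹ * ‖x + h‖) := by
              exact mul_le_mul_of_nonneg_left this hn.le
          _ = ‖x + h‖ := by field_simp
    · refine ⟨1, one_pos, ?_⟩
      intro x hx h hh
      rcases eq_or_ne x 0 with rfl | hx0
      · simp
      · exfalso
        have hn : (0:ℝ) < ‖x‖ := norm_pos_iff.2 hx0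
        refine hS ⟨‖x‖⁻¹ • x, hKcone x hx _ (inv_pos.2 hn), ?_⟩
        simp [norm_smul, abs_of_pos (inv_pos.2 hn), inv_mul_cancel₀ hn.ne']
  -- K + H is closed
  have hclosed : IsClosed (K + (H : Set V)) := by
    rw [← closure_subset_iff_isClosed]
    intro v hv
    obtain ⟨u, hu, hlim⟩ := mem_closure_iff_seq_limit.1 hv
    choose k hk h hh hsum using fun n => (Set.mem_add).1 (hu n)
    obtain ⟨C, hC⟩ : ∃ C, ∀ n, ‖u n‖ ≤ C := by
      obtain ⟨C, hC⟩ := (hlim.norm).bddAbove_range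
      exact ⟨C, fun n => hC ⟨n, rfl⟩⟩
    have hkb : ∀ n, k n ∈ K ∩ Metric.closedBall (0:V) (δ⁻¹ * C) := by
      intro n
      refine ⟨hk n, ?_⟩
      rw [Metric.mem_closedBall, dist_zero_right]
      have h1 : δ * ‖k n‖ ≤ ‖u n‖ := by
        rw [← hsum n]; exact hδ _ (hk n) _ (hh n)
      have := h1.trans (hC n)
      calc ‖k n‖ = δ⁻¹ * (δ * ‖k n‖) := by field_simp
        _ ≤ δ⁻¹ * C := mul_le_mul_of_nonneg_left this (inv_pos.2 hδpos).le
    have hcomp : IsCompact (K ∩ Metric.closedBall (0:V) (δ⁻¹ * C)) :=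
      (isCompact_closedBall 0 _).inter_left hKclosed
    obtain ⟨a, ha, φ, hφ, hφlim⟩ := hcomp.tendsto_subseq hkb
    have hulim : Tendsto (u ∘ φ) atTop (nhds v) := hlim.comp hφ.tendsto_atTop
    have hhlim : Tendsto (fun n => h (φ n)) atTop (nhds (v - a)) := by
      have : (fun n => h (φ n)) = fun n => (u ∘ φ) n - (k ∘ φ) n := by
        funext n; simp [← hsum (φ n)]
      rw [this]
      exact hulim.sub hφlim
    have hva : v - a ∈ (H : Set V) :=
      hHclosed.mem_of_tendsto hhlim (Eventually.of_forall fun n => hh (φ n))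
    exact ⟨a, ha.1, v - a, hva, by simp⟩
  apply Subset.antisymm
  · exact closure_minimal (add_subset_add_right subset_closure) hclosed
  · rintro x ⟨a, ha, b, hb, rfl⟩
    exact map_mem_closure (f := (· + b)) (continuous_add_right b) ha fun y hy => Set.add_mem_add hy hb
end

section
/- Let W be a finite-dimensional real normed vector space, L ⊆ W a linear subspace, π : W → W⧸L the quotient map, X ⊆ W an open subset, and Z := X + L. Then for every compact subset K ⊆ π(Z) of the quotient W⧸L there exists a compact subset K̃ ⊆ X such that π⁻¹(K) = K̃ + L = {k + l : k ∈ K̃, l ∈ L}. -/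
open Set Filter
open scoped Pointwise RealInnerProductSpace

theorem stmt_17 {W : Type*} [NormedAddCommGroup W] [NormedSpace ℝ W]
    [FiniteDimensional ℝ W]
    (L : Submodule ℝ W) (X : Set W) (hX : IsOpen X)
    (K : Set (W ⧸ L)) (hKc : IsCompact K)
    (hK : K ⊆ ⇑L.mkQ '' (X + (L : Set W))) :
    ∃ Kt : Set W, IsCompact Kt ∧ Kt ⊆ X ∧ ⇑L.mkQ ⁻¹' K = Kt + (L : Set W) := by
  have hLclosed : IsClosed (L : Set W) := L.closed_of_finiteDimensional
  have hcont : Continuous L.mkQ := L.isOpenQuotientMap_mkQ.continuous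
  have hopen : IsOpenMap L.mkQ := L.isOpenMap_mkQ
  have hKclosed : IsClosed K := hKc.isClosed
  -- for each k ∈ K choose a point of X mapping to k and radius with closedBall ⊆ X
  have hsel : ∀ k ∈ K, ∃ x : W, ∃ r : ℝ, 0 < r ∧ Metric.closedBall x r ⊆ X ∧ L.mkQ x = k := by
    intro k hk
    obtain ⟨w, hw, rfl⟩ := hK hk
    rw [Set.mem_add] at hw
    obtain ⟨x, hx, l, hl, rfl⟩ := hw
    obtain ⟨ε, hε, hball⟩ := Metric.isOpen_iff.1 hX x hx
    refine ⟨x, ε / 2, by positivity, ?_, ?_⟩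
    · exact (Metric.closedBall_subset_ball (by linarith)).trans hball
    · simp only [map_add]
      rw [show L.mkQ l = 0 from (Submodule.Quotient.mk_eq_zero L).2 hl, add_zero]
  choose! x r hr hballX hmk using hsel
  -- open cover of K
  have hcover : K ⊆ ⋃ k ∈ K, L.mkQ '' Metric.ball (x k) (r k) := by
    intro k hk
    refine Set.mem_biUnion hk ⟨x k, Metric.mem_ball_self (hr k hk), hmk k hk⟩
  obtain ⟨s, hs, hsfin, hscover⟩ := hKc.elim_finite_subcover_image
    (fun k hk => hopen _ Metric.isOpen_ball) hcover
  classical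
  refine ⟨(⋃ k ∈ s, Metric.closedBall (x k) (r k)) ∩ L.mkQ ⁻¹' K, ?_, ?_, ?_⟩
  · refine IsCompact.inter_right ?_ (hKclosed.preimage hcont)
    exact hsfin.isCompact_biUnion (fun k _ => isCompact_closedBall _ _)
  · exact fun w hw => by
      obtain ⟨k, hk, hwk⟩ := Set.mem_iUnion₂.1 hw.1
      exact hballX k (hs hk) hwk
  · ext w
    constructor
    · intro hw
      have : L.mkQ w ∈ ⋃ k ∈ s, L.mkQ '' Metric.ball (x k) (r k) := hscover hw
      obtain ⟨k, hk, b, hb, hbw⟩ := Set.mem_iUnion₂.1 this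
      have hbl : w - b ∈ L := (Submodule.Quotient.eq L).1 hbw.symm
      rw [Set.mem_add]
      refine ⟨b, ⟨Set.mem_biUnion hk (Metric.ball_subset_closedBall hb), ?_⟩,
        w - b, hbl, by abel⟩
      show L.mkQ b ∈ K
      rw [hbw]; exact hw
    · intro hw
      rw [Set.mem_add] at hw
      obtain ⟨b, hb, l, hl, rfl⟩ := hw
      show L.mkQ (b + l) ∈ K
      rw [map_add, show L.mkQ l = 0 from (Submodule.Quotient.mk_eq_zero L).2 hl, add_zero]
      exact hb.2
end
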